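/- For a > 0, p ∈ (0,1], and t ≥ 0, the identity Σ_{k=1}^∞ (1 - exp(-at)·Σ_{l=0}^{k-1} (at)^l / l!) · (1-p)^{k-1} · p = 1 - exp(-a·p·t) holds. -/

import Mathlib

set_option maxHeartbeats 1000000


open Real

/-- The mixture of Erlang-k CDFs (rate `a`) weighted by a geometric distribution with
parameter `p` equals the CDF of the exponential distribution with rate `a * p`:
`Σ_{k=1}^∞ (1 - e^{-at} Σ_{l=0}^{k-1} (at)^l/l!) (1-p)^{k-1} p = 1 - e^{-apt}`. -/
theorem geometric_mixture_of_erlang_cdfs (a p t : ℝ) (ha : 0 < a)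
    (hp : 0 < p) (hp1 : p ≤ 1) (ht : 0 ≤ t) :
    HasSum
      (fun k : ℕ =>
        (1 - Real.exp (-(a * t)) *
            ∑ l ∈ Finset.range (k + 1), (a * t) ^ l / (Nat.factorial l : ℝ)) *
          (1 - p) ^ k * p)
      (1 - Real.exp (-(a * p * t))) := by
  set x := a * t with hx
  set q := 1 - p with hq
  have hq0 : 0 ≤ q := by simp [hq]; linarith
  have hq1 : q < 1 := by simp [hq]; linarith
  have hx0 : 0 ≤ x := mul_nonneg ha.le ht
  set F : ℕ × ℕ → ℝ :=
    fun kl => if kl.2 ≤ kl.1 then x ^ kl.2 / (Nat.factorial kl.2 : ℝ) * q ^ kl.1 * p else 0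
    with hF
  -- summability of F by comparison with a product of summable series
  have hgeom : HasSum (fun k : ℕ => q ^ k) (1 - q)⁻¹ :=
    hasSum_geometric_of_lt_one hq0 hq1
  have hFs : Summable F := by
    have hprod : Summable (fun kl : ℕ × ℕ =>
        (q ^ kl.1 * p) * (x ^ kl.2 / (Nat.factorial kl.2 : ℝ))) :=
      (hgeom.summable.mul_right p).mul_of_nonneg
        (Real.summable_pow_div_factorial x)
        (fun n => by positivity) (fun n => by positivity)
    refine Summable.of_nonneg_of_le (fun kl => ?_) (fun kl => ?_) hprod
    · by_cases h : kl.2 ≤ kl.1 <;> simp only [hF, h, if_true, if_false, le_refl] <;> positivity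
    · by_cases h : kl.2 ≤ kl.1 <;> simp only [hF, h, if_true, if_false]
      · apply le_of_eq; ring
      · positivity
  -- fibers over the second coordinate (fixed l)
  have hfib_l : ∀ l : ℕ, HasSum (fun k => F (k, l)) ((x * q) ^ l / (Nat.factorial l : ℝ)) := by
    intro l
    set c : ℝ := x ^ l / (Nat.factorial l : ℝ) with hc
    have hf : HasSum (fun k : ℕ => c * q ^ k * p) (c * (1 - q)⁻¹ * p) :=
      (hgeom.mul_left c).mul_right p
    have hite : HasSum (fun k : ℕ => if k < l then c * q ^ k * p else 0)
        (∑ k ∈ Finset.range l, c * q ^ k * p) := by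
      have h0 := hasSum_sum_of_ne_finset_zero (L := SummationFilter.unconditional ℕ) (s := Finset.range l)
        (f := fun k : ℕ => if k < l then c * q ^ k * p else 0)
        (by intro b hb; simp [Finset.mem_range] at hb; simp [hb, Nat.not_lt.mpr hb])
      have he : (∑ k ∈ Finset.range l, if k < l then c * q ^ k * p else 0)
          = ∑ k ∈ Finset.range l, c * q ^ k * p :=
        Finset.sum_congr rfl (fun k hk => by simp [Finset.mem_range.mp hk])
      rwa [he] at h0
    have hsub := hf.sub hite
    have heq : (fun k : ℕ => c * q ^ k * p - if k < l then c * q ^ k * p else 0)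
        = fun k => F (k, l) := by
      funext k
      by_cases h : l ≤ k
      · simp [hF, h, Nat.not_lt.mpr h, hc]
      · simp [hF, h, Nat.lt_of_not_le h]
    rw [heq] at hsub
    convert hsub using 1
    · rfl
    have hqne : q ≠ 1 := ne_of_lt hq1
    have hsum : ∑ k ∈ Finset.range l, c * q ^ k * p
        = c * p * ∑ k ∈ Finset.range l, q ^ k := by
      rw [Finset.mul_sum]; exact Finset.sum_congr rfl (fun k _ => by ring)
    rw [hsum, geom_sum_eq hqne, mul_pow]
    have hfac : (Nat.factorial l : ℝ) ≠ 0 := Nat.cast_ne_zero.mpr (Nat.factorial_ne_zero l)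
    simp only [hc, hq]
    field_simp
    rw [sub_sub_cancel, sub_sub_cancel_left]
    have hp0 : p ≠ 0 := hp.ne'
    field_simp
    ring
  -- the total sum equals exp (x * q)
  have hexp : HasSum (fun l : ℕ => (x * q) ^ l / (Nat.factorial l : ℝ)) (Real.exp (x * q)) := by
    rw [Real.exp_eq_exp_ℝ]
    exact NormedSpace.expSeries_div_hasSum_exp (x * q)
  have hFtotal : HasSum F (Real.exp (x * q)) := by
    have hG : Summable (fun lk : ℕ × ℕ => F (lk.2, lk.1)) :=
      hFs.comp_injective (Equiv.prodComm ℕ ℕ).injective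
    have h1 : HasSum (fun l : ℕ => (x * q) ^ l / (Nat.factorial l : ℝ))
        (∑' lk : ℕ × ℕ, F (lk.2, lk.1)) :=
      hG.hasSum.prod_fiberwise hfib_l
    have h2 : (∑' lk : ℕ × ℕ, F (lk.2, lk.1)) = Real.exp (x * q) := h1.unique hexp
    have h3 : (∑' lk : ℕ × ℕ, F (lk.2, lk.1)) = ∑' kl : ℕ × ℕ, F kl :=
      (Equiv.prodComm ℕ ℕ).tsum_eq (fun kl => F kl)
    rw [h3] at h2
    exact h2 ▸ hFs.hasSum
  -- fibers over the first coordinate (fixed k)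
  have hfib_k : ∀ k : ℕ, HasSum (fun l => F (k, l))
      (∑ l ∈ Finset.range (k + 1), x ^ l / (Nat.factorial l : ℝ) * q ^ k * p) := by
    intro k
    have := hasSum_sum_of_ne_finset_zero (L := SummationFilter.unconditional ℕ) (s := Finset.range (k + 1))
      (f := fun l : ℕ => F (k, l))
      (by intro b hb; simp [Finset.mem_range, Nat.lt_succ_iff] at hb; simp [hF, hb])
    have heq : ∑ l ∈ Finset.range (k + 1), F (k, l)
        = ∑ l ∈ Finset.range (k + 1), x ^ l / (Nat.factorial l : ℝ) * q ^ k * p :=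
      Finset.sum_congr rfl
        (fun l hl => by simp [hF, Nat.lt_succ_iff.mp (Finset.mem_range.mp hl)])
    rwa [heq] at this
  have hg : HasSum (fun k : ℕ =>
      ∑ l ∈ Finset.range (k + 1), x ^ l / (Nat.factorial l : ℝ) * q ^ k * p)
      (Real.exp (x * q)) :=
    hFtotal.prod_fiberwise hfib_k
  -- final assembly
  have hfinal := ((hgeom.mul_left p).sub (hg.mul_left (Real.exp (-x))))
  convert hfinal using 1
  · rfl
  · funext k
    rw [← Finset.sum_mul, ← Finset.sum_mul]
    ring
  · rw [← Real.exp_add]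
    have : q = 1 - p := hq
    have h1 : p * (1 - q)⁻¹ = 1 := by rw [this]; field_simp; rw [sub_sub_cancel, div_self hp.ne']
    rw [h1]
    congr 1
    rw [hq, hx]; ring
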